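/- arXiv:1112.0444 — 3 statements merged into one kernel-verified Lean document; each statement's English description precedes it below -/
import Mathlib

section
/- Let A be a unital C*-algebra and let π be a non-degenerate *-representation of the Banach *-algebra A ⊗^_r A (the operator space projective tensor product of A with itself equipped with the reverse involution (a⊗b)* = b*⊗a*) on a Hilbert space H. Define π₁(a) = π(a⊗1) and π₂(a) = π(1⊗a). Then π₁ and π₂ are *-representations of A with commuting ranges, π₁ = π₂, and π(a⊗b) = π₁(ab) for all a, b ∈ A. -/
noncomputable section

structure StarRep (A : Type) [NormedRing A] [StarRing A] [NormedAlgebra ℂ A] where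
  H : Type
  [nacg : NormedAddCommGroup H]
  [ips : InnerProductSpace ℂ H]
  [cs : CompleteSpace H]
  π : A →⋆ₐ[ℂ] (H →L[ℂ] H)
  cont : Continuous π

attribute [instance] StarRep.nacg StarRep.ips StarRep.cs

variable {A : Type} [NormedRing A] [StarRing A] [NormedAlgebra ℂ A]

def StarRep.ker (ρ : StarRep A) : Set A := {a | ρ.π a = 0}

def StarRep.Nondegenerate (ρ : StarRep A) : Prop :=
  Dense (Submodule.span ℂ {v : ρ.H | ∃ a x, ρ.π a x = v} : Set ρ.H)

def StarRep.IsIrreducible (ρ : StarRep A) : Prop :=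
  (∃ a, ρ.π a ≠ 0) ∧
    ∀ K : Submodule ℂ ρ.H, IsClosed (K : Set ρ.H) →
      (∀ a, ∀ v ∈ K, ρ.π a v ∈ K) → K = ⊥ ∨ K = ⊤

def StarRegular (A : Type) [NormedRing A] [StarRing A] [NormedAlgebra ℂ A] : Prop :=
  ∀ π ρ : StarRep A, π.Nondegenerate → ρ.Nondegenerate → π.ker ⊆ ρ.ker →
    ∀ a, ‖ρ.π a‖ ≤ ‖π.π a‖

def StarReduced (A : Type) [NormedRing A] [StarRing A] [NormedAlgebra ℂ A] : Prop :=
  ∀ a : A, a ≠ 0 → ∃ ρ : StarRep A, ρ.π a ≠ 0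

/-- A realization of the operator space projective tensor product `A ⊗^ A` equipped with
the reverse involution `(a ⊗ b)* = b* ⊗ a*`. -/
structure ReverseTensorRealization (A P : Type)
    [NormedRing A] [StarRing A] [NormedAlgebra ℂ A]
    [NormedRing P] [StarRing P] [NormedAlgebra ℂ P] where
  ι : A →ₗ[ℂ] A →ₗ[ℂ] P
  mul_ι : ∀ a b c d, ι a b * ι c d = ι (a * c) (b * d)
  star_ι : ∀ a b, star (ι a b) = ι (star b) (star a)
  dense_span : Dense (Submodule.span ℂ {x : P | ∃ a b, ι a b = x} : Set P)
  cross : ∀ a b, ‖ι a b‖ = ‖a‖ * ‖b‖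
  one_ι : ι 1 1 = 1


section RevAux
set_option linter.unusedSectionVars false

variable {A P : Type}
    [NormedRing A] [StarRing A] [CStarRing A] [NormedAlgebra ℂ A] [StarModule ℂ A]
    [CompleteSpace A]
    [NormedRing P] [StarRing P] [NormedAlgebra ℂ P] [CompleteSpace P]
    (t : ReverseTensorRealization A P) (π : StarRep P)

lemma rev_mul1 (a b : A) :
    π.π (t.ι a 1) * π.π (t.ι 1 b) = π.π (t.ι a b) := by
  rw [← map_mul, t.mul_ι, mul_one, one_mul]

lemma rev_mul2 (a b : A) :
    π.π (t.ι 1 b) * π.π (t.ι a 1) = π.π (t.ι a b) := by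
  rw [← map_mul, t.mul_ι, mul_one, one_mul]

lemma rev_star1 (a : A) : star (π.π (t.ι a 1)) = π.π (t.ι 1 (star a)) := by
  rw [← map_star, t.star_ι, star_one]

lemma rev_star2 (a : A) : star (π.π (t.ι 1 a)) = π.π (t.ι (star a) 1) := by
  rw [← map_star, t.star_ι, star_one]

/-- `a ↦ π (a ⊗ 1)` as an algebra homomorphism. -/
def revPhi : A →ₐ[ℂ] (π.H →L[ℂ] π.H) :=
  AlgHom.ofLinearMap (π.π.toAlgHom.toLinearMap ∘ₗ t.ι.flip 1)
    (by
      simp only [LinearMap.coe_comp, Function.comp_apply, LinearMap.flip_apply,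
        AlgHom.toLinearMap_apply, StarAlgHom.coe_toAlgHom]
      rw [t.one_ι, map_one])
    (by
      intro x y
      simp only [LinearMap.coe_comp, Function.comp_apply, LinearMap.flip_apply,
        AlgHom.toLinearMap_apply, StarAlgHom.coe_toAlgHom]
      rw [← map_mul, t.mul_ι, one_mul])

lemma revPhi_apply (a : A) : revPhi t π a = π.π (t.ι a 1) := rfl

lemma revPhi_cont : Continuous (revPhi t π) := by
  have h1 : Continuous fun a : A => t.ι a 1 := by
    refine AddMonoidHomClass.continuous_of_bound (t.ι.flip 1) ‖(1 : A)‖ fun a => le_of_eq ?_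
    rw [LinearMap.flip_apply, t.cross, mul_comm]
  exact π.cont.comp h1

/-- `a ↦ π (1 ⊗ a)` as an algebra homomorphism. -/
def revPsi : A →ₐ[ℂ] (π.H →L[ℂ] π.H) :=
  AlgHom.ofLinearMap (π.π.toAlgHom.toLinearMap ∘ₗ t.ι 1)
    (by
      simp only [LinearMap.coe_comp, Function.comp_apply,
        AlgHom.toLinearMap_apply, StarAlgHom.coe_toAlgHom]
      rw [t.one_ι, map_one])
    (by
      intro x y
      simp only [LinearMap.coe_comp, Function.comp_apply,
        AlgHom.toLinearMap_apply, StarAlgHom.coe_toAlgHom]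
      rw [← map_mul, t.mul_ι, one_mul])

lemma revPsi_apply (a : A) : revPsi t π a = π.π (t.ι 1 a) := rfl

lemma revPsi_cont : Continuous (revPsi t π) := by
  have h1 : Continuous fun a : A => t.ι 1 a := by
    refine AddMonoidHomClass.continuous_of_bound (t.ι 1) ‖(1 : A)‖ fun a => le_of_eq ?_
    rw [t.cross]
  exact π.cont.comp h1

lemma rev_key_sa (a : A) (ha : IsSelfAdjoint a) :
    π.π (t.ι a 1) = π.π (t.ι 1 a) := by
  rcases subsingleton_or_nontrivial π.H with hH | hH
  · ext v; exact Subsingleton.elim _ _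
  set x := π.π (t.ι a 1) with hx
  set y := π.π (t.ι 1 a) with hy
  have hcomm : Commute x y := (rev_mul1 t π a a).trans (rev_mul2 t π a a).symm
  have hxstar : star x = y := by rw [hx, rev_star1, ha.star_eq]
  have hystar : star y = x := by rw [hy, rev_star2, ha.star_eq]
  obtain ⟨C, hC0, hC⟩ :=
    SemilinearMapClass.bound_of_continuous π.π.toAlgHom.toLinearMap π.cont
  set S : π.H →L[ℂ] π.H := Complex.I • (x - y) with hSdef
  have hSsa : IsSelfAdjoint S := by
    rw [IsSelfAdjoint, hSdef, star_smul, star_sub, hxstar, hystar, Complex.star_def,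
      Complex.conj_I, neg_smul, smul_sub, smul_sub, neg_sub]
  letI : NormedAlgebra ℚ A := NormedAlgebra.restrictScalars ℚ ℂ A
  letI : NormedAlgebra ℚ (π.H →L[ℂ] π.H) := NormedAlgebra.restrictScalars ℚ ℂ _
  have hbound : ∀ τ : ℝ, ‖NormedSpace.exp ((τ : ℂ) • S)‖ ≤ C * ‖(1 : A)‖ := by
    intro τ
    set c : ℂ := (τ : ℂ) * Complex.I with hc
    set u := NormedSpace.exp (c • a) with hu
    set v := NormedSpace.exp ((-c) • a) with hv
    have hcomm2 : Commute ((-c) • a) (c • a) := ((Commute.refl a).smul_left (-c)).smul_right c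
    have hvu : v * u = 1 := by
      rw [hu, hv, ← NormedSpace.exp_add_of_commute hcomm2, ← add_smul, neg_add_cancel,
        zero_smul, NormedSpace.exp_zero]
    have huv : u * v = 1 := by
      rw [hu, hv, ← NormedSpace.exp_add_of_commute hcomm2.symm, ← add_smul, add_neg_cancel,
        zero_smul, NormedSpace.exp_zero]
    have hustar : star u = v := by
      rw [hu, hv, NormedSpace.star_exp, star_smul, ha.star_eq]
      congr 1
      rw [Complex.star_def, hc]
      simp [Complex.ext_iff]
    have hvstar : star v = u := by rw [← hustar, star_star]
    have hun : ‖u‖ = Real.sqrt ‖(1 : A)‖ := by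
      have h2 : ‖u‖ * ‖u‖ = ‖(1 : A)‖ := by rw [← CStarRing.norm_star_mul_self, hustar, hvu]
      rw [← h2, Real.sqrt_mul_self (norm_nonneg u)]
    have hvn : ‖v‖ = Real.sqrt ‖(1 : A)‖ := by
      have h2 : ‖v‖ * ‖v‖ = ‖(1 : A)‖ := by rw [← CStarRing.norm_star_mul_self, hvstar, huv]
      rw [← h2, Real.sqrt_mul_self (norm_nonneg v)]
    have hexp1 : NormedSpace.exp (c • x) = π.π (t.ι u 1) := by
      have h1 : revPhi t π (c • a) = c • x := by rw [map_smul, revPhi_apply, ← hx]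
      rw [← h1, ← NormedSpace.map_exp (revPhi t π) (revPhi_cont t π), ← hu, revPhi_apply]
    have hexp2 : NormedSpace.exp ((-c) • y) = π.π (t.ι 1 v) := by
      have h1 : revPsi t π ((-c) • a) = (-c) • y := by rw [map_smul, revPsi_apply, ← hy]
      rw [← h1, ← NormedSpace.map_exp (revPsi t π) (revPsi_cont t π), ← hv, revPsi_apply]
    have hsum : (τ : ℂ) • S = c • x + (-c) • y := by
      rw [hSdef, smul_smul, ← hc, smul_sub, neg_smul, sub_eq_add_neg]
    rw [hsum, NormedSpace.exp_add_of_commute ((hcomm.smul_left c).smul_right (-c)),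
      hexp1, hexp2, rev_mul1]
    calc ‖π.π (t.ι u v)‖ ≤ C * ‖t.ι u v‖ := hC _
      _ = C * (‖u‖ * ‖v‖) := by rw [t.cross]
      _ = C * ‖(1 : A)‖ := by rw [hun, hvn, Real.mul_self_sqrt (norm_nonneg _)]
  have hspec : ∀ μ ∈ spectrum ℂ S, μ = 0 := by
    intro μ hμ
    have hre : μ = (μ.re : ℂ) := hSsa.mem_spectrum_eq_re hμ
    have hkey : ∀ τ : ℝ, τ ≠ 0 → Real.exp (τ * μ.re) ≤ C * ‖(1 : A)‖ := by
      intro τ hτ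
      have hτ' : ((τ : ℂ)) ≠ 0 := by exact_mod_cast hτ
      have h1 : (Units.mk0 (τ : ℂ) hτ') • μ ∈ spectrum ℂ ((Units.mk0 (τ : ℂ) hτ') • S) :=
        spectrum.smul_mem_smul_iff.mpr hμ
      have h2 : (τ : ℂ) * μ ∈ spectrum ℂ ((τ : ℂ) • S) := by
        simpa [Units.smul_def, smul_eq_mul] using h1
      have h3 := spectrum.exp_mem_exp ((τ : ℂ) • S) h2
      have h4 : ‖NormedSpace.exp ((τ : ℂ) * μ)‖ ≤ ‖NormedSpace.exp ((τ : ℂ) • S)‖ :=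
        spectrum.norm_le_norm_of_mem h3
      have h5 : ‖NormedSpace.exp ((τ : ℂ) * μ)‖ = Real.exp (τ * μ.re) := by
        rw [← Complex.exp_eq_exp_ℂ, Complex.norm_exp]
        congr 1
        rw [hre]
        simp
      rw [h5] at h4
      exact h4.trans (hbound τ)
    have hre0 : μ.re = 0 := by
      by_contra hne
      have hM : (0 : ℝ) ≤ C * ‖(1 : A)‖ := mul_nonneg hC0.le (norm_nonneg _)
      have hτ : (C * ‖(1 : A)‖ + 1) / μ.re ≠ 0 := div_ne_zero (by linarith) hne
      have h6 := hkey _ hτ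
      rw [div_mul_cancel₀ _ hne] at h6
      have h7 := Real.add_one_le_exp (C * ‖(1 : A)‖ + 1)
      linarith
    rw [hre, hre0, Complex.ofReal_zero]
  have hrad : spectralRadius ℂ S = 0 := by
    rw [spectralRadius]
    refine le_antisymm (iSup₂_le fun k hk => by simp [hspec k hk]) zero_le
  have hS0 : S = 0 := by
    have h1 := hSsa.spectralRadius_eq_nnnorm
    rw [hrad] at h1
    have h2 : ‖S‖₊ = 0 := by exact_mod_cast h1.symm
    simpa using h2
  have h3 : Complex.I • (x - y) = 0 := by rw [← hSdef]; exact hS0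
  have h4 : x - y = 0 := (smul_eq_zero.mp h3).resolve_left Complex.I_ne_zero
  exact sub_eq_zero.mp h4

lemma rev_key (a : A) : π.π (t.ι a 1) = π.π (t.ι 1 a) := by
  obtain ⟨b, c, hb, hc, habc⟩ : ∃ b c : A, IsSelfAdjoint b ∧ IsSelfAdjoint c ∧
      a = b + Complex.I • c := by
    refine ⟨(2⁻¹ : ℂ) • (a + star a), (-Complex.I / 2) • (a - star a), ?_, ?_, ?_⟩
    · rw [IsSelfAdjoint, star_smul, star_add, star_star]
      rw [show star (2⁻¹ : ℂ) = (2⁻¹ : ℂ) by simp, add_comm]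
    · rw [IsSelfAdjoint, star_smul, star_sub, star_star]
      rw [show star (-Complex.I / 2) = (Complex.I / 2 : ℂ) by simp [Complex.star_def]]
      rw [neg_div, neg_smul, ← smul_neg, neg_sub]
    · match_scalars <;> simp [Complex.ext_iff] <;> ring
  calc π.π (t.ι a 1)
      = π.π (t.ι b 1) + Complex.I • π.π (t.ι c 1) := by
        conv_lhs => rw [habc]
        simp only [map_add, map_smul, LinearMap.add_apply, LinearMap.smul_apply]
    _ = π.π (t.ι 1 b) + Complex.I • π.π (t.ι 1 c) := by
        rw [rev_key_sa t π b hb, rev_key_sa t π c hc]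
    _ = π.π (t.ι 1 a) := by
        conv_rhs => rw [habc]
        simp only [map_add, map_smul, LinearMap.add_apply, LinearMap.smul_apply]

end RevAux

/-- Let `A` be a unital C*-algebra and `π` a non-degenerate
`*`-representation of `A ⊗^_r A` (the operator space projective tensor product with the
reverse involution).  With `π₁ a = π (a ⊗ 1)` and `π₂ a = π (1 ⊗ a)`, the maps `π₁`, `π₂`
are `*`-preserving, have commuting ranges, coincide, and `π (a ⊗ b) = π₁ (a * b)`. -/
theorem reverse_involution_rep_structure
    {A P : Type}
    [NormedRing A] [StarRing A] [CStarRing A] [NormedAlgebra ℂ A] [StarModule ℂ A]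
      [CompleteSpace A]
    [NormedRing P] [StarRing P] [NormedAlgebra ℂ P] [CompleteSpace P]
    (t : ReverseTensorRealization A P)
    (π : StarRep P) (hnd : π.Nondegenerate) :
    (∀ a : A, π.π (t.ι (star a) 1) = star (π.π (t.ι a 1))) ∧
    (∀ a : A, π.π (t.ι 1 (star a)) = star (π.π (t.ι 1 a))) ∧
    (∀ a b : A, π.π (t.ι a 1) * π.π (t.ι 1 b) = π.π (t.ι 1 b) * π.π (t.ι a 1)) ∧
    (∀ a : A, π.π (t.ι a 1) = π.π (t.ι 1 a)) ∧
    (∀ a b : A, π.π (t.ι a b) = π.π (t.ι (a * b) 1)) := by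
  refine ⟨?_, ?_, ?_, rev_key t π, ?_⟩
  · intro a
    rw [rev_key t π (star a), rev_star1]
  · intro a
    rw [rev_star2, ← rev_key t π (star a)]
  · intro a b
    rw [rev_mul1 t π a b, rev_mul2 t π a b]
  · intro a b
    rw [← rev_mul1 t π a b, ← rev_key t π b, ← map_mul, t.mul_ι, one_mul]
end
end

section
/- For every unital C*-algebra A, the Banach *-algebra A ⊗^_r A (operator space projective tensor product with the reverse involution) is *-regular: for any non-degenerate *-representations π and ρ of A ⊗^_r A with ker π ⊆ ker ρ, one has ‖ρ(x)‖ ≤ ‖π(x)‖ for all x ∈ A ⊗^_r A. -/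
noncomputable section

variable {A : Type} [NormedRing A] [StarRing A] [NormedAlgebra ℂ A]

/-! ### Auxiliary lemmas -/

/-- A nondegenerate `*`-representation is unital. -/
lemma StarRep.apply_one {Q : Type} [NormedRing Q] [StarRing Q] [NormedAlgebra ℂ Q]
    (σ : StarRep Q) (h : σ.Nondegenerate) : σ.π (1 : Q) = 1 := by
  have hclosed : IsClosed {w : σ.H | σ.π 1 w = w} :=
    isClosed_eq (σ.π 1).continuous continuous_id
  have hsub : (Submodule.span ℂ {v : σ.H | ∃ a x, σ.π a x = v} : Set σ.H) ⊆
      {w : σ.H | σ.π 1 w = w} := by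
    intro w hw
    induction hw using Submodule.span_induction with
    | mem w hw =>
      obtain ⟨a, u, rfl⟩ := hw
      show σ.π 1 (σ.π a u) = σ.π a u
      rw [← ContinuousLinearMap.mul_apply, ← map_mul, one_mul]
    | zero => simp
    | add x y _ _ hx hy =>
      show σ.π 1 (x + y) = x + y
      rw [map_add, hx, hy]
    | smul c x _ hx =>
      show σ.π 1 (c • x) = c • x
      rw [map_smul, hx]
  ext v
  have hv : v ∈ closure (Submodule.span ℂ {v : σ.H | ∃ a x, σ.π a x = v} : Set σ.H) := h v
  simpa using hclosed.closure_subset_iff.mpr hsub hv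

/-- If the kernel of a star algebra homomorphism of C*-algebras is contained in the kernel of
another, the latter is dominated in norm by the former. -/
lemma starAlgHom_norm_le_of_ker_subset {A B C : Type} [CStarAlgebra A] [CStarAlgebra B]
    [CStarAlgebra C] (φ : A →⋆ₐ[ℂ] B) (ψ : A →⋆ₐ[ℂ] C)
    (hker : ∀ a, φ a = 0 → ψ a = 0) : ∀ a, ‖ψ a‖ ≤ ‖φ a‖ := by
  obtain (hB | hB) := subsingleton_or_nontrivial B
  · intro a
    have h0 : ψ a = 0 := hker a (Subsingleton.elim _ _)
    simp [h0]
  have hφc : Continuous φ :=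
    AddMonoidHomClass.continuous_of_bound φ 1
      fun a => by simpa using NonUnitalStarAlgHom.norm_apply_le φ a
  have hψc : Continuous ψ :=
    AddMonoidHomClass.continuous_of_bound ψ 1
      fun a => by simpa using NonUnitalStarAlgHom.norm_apply_le ψ a
  have key : ∀ c : A, IsSelfAdjoint c → ‖ψ c‖ ≤ ‖φ c‖ := by
    intro c hc
    set r : ℝ := ‖φ c‖ with hr
    have hr0 : (0 : ℝ) ≤ r := norm_nonneg _
    set f : ℝ → ℝ := fun x => max (|x| - r) 0 with hfdef
    have hfc : Continuous f := by fun_prop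
    have hφsa : IsSelfAdjoint (φ c) := hc.map φ
    have hψsa : IsSelfAdjoint (ψ c) := hc.map ψ
    have h1 : φ (cfc f c) = cfc f (φ c) :=
      StarAlgHom.map_cfc φ f c (hf := hfc.continuousOn) (hφ := hφc) (ha := hc) (hφa := hφsa)
    have h2 : cfc f (φ c) = 0 := by
      have hEq : ∀ x ∈ spectrum ℝ (φ c), f x = (0 : ℝ → ℝ) x := by
        intro x hx
        have hxr : ‖x‖ ≤ r := hr ▸ spectrum.norm_le_norm_of_mem hx
        have : |x| - r ≤ 0 := by
          rw [Real.norm_eq_abs] at hxr; linarith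
        simp [hfdef, max_eq_right this]
      calc cfc f (φ c) = cfc (0 : ℝ → ℝ) (φ c) := cfc_congr hEq
        _ = 0 := cfc_zero ℝ _
    have h3 : cfc f (ψ c) = 0 := by
      rw [← StarAlgHom.map_cfc ψ f c (hf := hfc.continuousOn) (hφ := hψc) (ha := hc)
        (hφa := hψsa)]
      have : φ (cfc f c) = 0 := h1.trans h2
      exact hker _ this
    have h4 : (spectrum ℝ (ψ c)).EqOn f (0 : ℝ → ℝ) :=
      eqOn_of_cfc_eq_cfc (a := ψ c) (by rw [h3, cfc_zero ℝ (ψ c)])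
        (hf := hfc.continuousOn) (ha := hψsa)
    have h5 : ∀ x ∈ spectrum ℝ (ψ c), ‖(id : ℝ → ℝ) x‖ ≤ r := by
      intro x hx
      have hfx : f x = 0 := h4 hx
      have : |x| - r ≤ 0 := by
        by_contra hcon
        push_neg at hcon
        have : f x = |x| - r := max_eq_left (le_of_lt hcon)
        rw [hfx] at this
        linarith
      simpa [Real.norm_eq_abs] using (by linarith : |x| ≤ r)
    calc ‖ψ c‖ = ‖cfc (id : ℝ → ℝ) (ψ c)‖ := by rw [cfc_id ℝ (ψ c)]
      _ ≤ r := norm_cfc_le hr0 h5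
  intro a
  have hsq : ‖ψ a‖ * ‖ψ a‖ ≤ ‖φ a‖ * ‖φ a‖ := by
    have h := key (star a * a) (IsSelfAdjoint.star_mul_self a)
    rw [map_mul, map_mul, map_star, map_star, CStarRing.norm_star_mul_self,
      CStarRing.norm_star_mul_self] at h
    exact h
  nlinarith [norm_nonneg (ψ a), norm_nonneg (φ a)]

section Tensor

variable {A P : Type}
    [NormedRing A] [StarRing A] [CStarRing A] [NormedAlgebra ℂ A] [StarModule ℂ A]
      [CompleteSpace A]
    [NormedRing P] [StarRing P] [NormedAlgebra ℂ P] [CompleteSpace P]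

lemma exists_starAlgHom (t : ReverseTensorRealization A P) (σ : StarRep P)
    (hσ1 : σ.π (1 : P) = 1) :
    ∃ Φ : A →⋆ₐ[ℂ] (σ.H →L[ℂ] σ.H), ∀ a b : A, σ.π (t.ι a b) = Φ (a * b) := by
  letI : CStarAlgebra A :=
    { ‹NormedRing A›, ‹StarRing A›, ‹CompleteSpace A›, ‹CStarRing A›,
      ‹NormedAlgebra ℂ A›, ‹StarModule ℂ A› with }
  have hmul12 : ∀ a b : A, σ.π (t.ι a 1) * σ.π (t.ι 1 b) = σ.π (t.ι a b) := fun a b => by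
    rw [← map_mul, t.mul_ι, mul_one, one_mul]
  have hmul21 : ∀ a b : A, σ.π (t.ι 1 b) * σ.π (t.ι a 1) = σ.π (t.ι a b) := fun a b => by
    rw [← map_mul, t.mul_ι, mul_one, one_mul]
  have hstar1 : ∀ a : A, star (σ.π (t.ι a 1)) = σ.π (t.ι 1 (star a)) := fun a => by
    rw [← map_star, t.star_ι, star_one]
  -- the unital algebra homomorphism `a ↦ σ.π (a ⊗ 1)`
  let q : A →ₐ[ℂ] (σ.H →L[ℂ] σ.H) :=
  { toFun := fun a => σ.π (t.ι a 1)
    map_one' := by simp only [t.one_ι]; exact hσ1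
    map_mul' := fun a b => by
      show σ.π (t.ι (a * b) 1) = σ.π (t.ι a 1) * σ.π (t.ι b 1)
      rw [← map_mul, t.mul_ι, mul_one]
    map_zero' := by
      show σ.π (t.ι 0 1) = 0
      simp only [map_zero, LinearMap.zero_apply]
    map_add' := fun a b => by
      show σ.π (t.ι (a + b) 1) = σ.π (t.ι a 1) + σ.π (t.ι b 1)
      simp only [map_add, LinearMap.add_apply]
    commutes' := fun z => by
      show σ.π (t.ι (algebraMap ℂ A z) 1) = algebraMap ℂ _ z
      simp only [Algebra.algebraMap_eq_smul_one, map_smul, LinearMap.smul_apply, t.one_ι, hσ1] }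
  have hq : ∀ a, q a = σ.π (t.ι a 1) := fun _ => rfl
  -- every `q a` is normal
  have hnormal : ∀ a : A, IsStarNormal (q a) := by
    intro a
    refine ⟨?_⟩
    show star (q a) * q a = q a * star (q a)
    rw [hq, hstar1, hmul21, hmul12]
  -- `q` maps selfadjoint elements to selfadjoint operators
  have hsa : ∀ h : A, IsSelfAdjoint h → IsSelfAdjoint (q h) := by
    intro h hh
    refine isSelfAdjoint_iff_isStarNormal_and_quasispectrumRestricts.mpr
      ⟨hnormal h, quasispectrumRestricts_iff_spectrumRestricts.mpr ?_⟩
    refine SpectrumRestricts.of_subset_range_algebraMap (fun x => by simp) ?_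
    intro z hz
    have hz' : z ∈ spectrum ℂ h := AlgHom.spectrum_apply_subset q h hz
    exact ⟨z.re, (hh.mem_spectrum_eq_re hz').symm⟩
  -- hence the two marginal maps agree
  have hself : ∀ h : A, IsSelfAdjoint h → σ.π (t.ι 1 h) = q h := by
    intro h hh
    have h1 : star (q h) = σ.π (t.ι 1 h) := by rw [hq, hstar1, hh.star_eq]
    rw [← h1, (hsa h hh).star_eq]
  have hp2p1 : ∀ a : A, σ.π (t.ι 1 a) = q a := by
    intro a
    have hu : IsSelfAdjoint (a + star a) := by
      rw [IsSelfAdjoint, star_add, star_star, add_comm]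
    have hv : IsSelfAdjoint (Complex.I • (a - star a)) := by
      rw [IsSelfAdjoint, star_smul, star_sub, star_star, Complex.star_def, Complex.conj_I,
        neg_smul, ← smul_neg, neg_sub]
    have h2a : (a + star a) - Complex.I • (Complex.I • (a - star a)) = (2:ℂ) • a := by
      rw [smul_smul, Complex.I_mul_I, neg_one_smul, sub_neg_eq_add, two_smul]
      abel
    have hL : σ.π (t.ι 1 ((2:ℂ) • a)) = q ((2:ℂ) • a) := by
      calc σ.π (t.ι 1 ((2:ℂ) • a))
          = σ.π (t.ι 1 (a + star a)) - Complex.I • σ.π (t.ι 1 (Complex.I • (a - star a))) := by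
            rw [← h2a, map_sub (t.ι 1), map_smul (t.ι 1), map_sub σ.π, map_smul σ.π]
        _ = q (a + star a) - Complex.I • q (Complex.I • (a - star a)) := by
            rw [hself _ hu, hself _ hv]
        _ = q ((2:ℂ) • a) := by rw [← map_smul q, ← map_sub q, h2a]
    have h2 : (2:ℂ) • σ.π (t.ι 1 a) = (2:ℂ) • q a := by
      simpa only [map_smul] using hL
    have h3 := congrArg (fun x : σ.H →L[ℂ] σ.H => ((2:ℂ)⁻¹) • x) h2
    simpa [smul_smul, inv_mul_cancel₀ (by norm_num : (2:ℂ) ≠ 0)] using h3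
  -- the star algebra homomorphism
  have hstarhom : ∀ a : A, star (q a) = q (star a) := fun a => by
    rw [hq, hstar1, hp2p1]
  refine ⟨{ q with map_star' := fun x => (hstarhom x).symm }, ?_⟩
  intro a b
  show σ.π (t.ι a b) = q (a * b)
  rw [map_mul, ← hp2p1 b, hq, hmul12]

end Tensor

/-- For every unital C*-algebra `A`, the Banach `*`-algebra `A ⊗^_r A`
(operator space projective tensor product with the reverse involution) is `*`-regular:
for any non-degenerate `*`-representations `π`, `ρ` with `ker π ⊆ ker ρ` one has
`‖ρ x‖ ≤ ‖π x‖` for all `x`. -/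
theorem reverse_involution_starRegular
    {A P : Type}
    [NormedRing A] [StarRing A] [CStarRing A] [NormedAlgebra ℂ A] [StarModule ℂ A]
      [CompleteSpace A]
    [NormedRing P] [StarRing P] [NormedAlgebra ℂ P] [CompleteSpace P]
    (t : ReverseTensorRealization A P) :
    ∀ π ρ : StarRep P, π.Nondegenerate → ρ.Nondegenerate → π.ker ⊆ ρ.ker →
      ∀ x : P, ‖ρ.π x‖ ≤ ‖π.π x‖ := by
  intro π ρ hπ hρ hker x
  letI : CStarAlgebra A :=
    { ‹NormedRing A›, ‹StarRing A›, ‹CompleteSpace A›, ‹CStarRing A›,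
      ‹NormedAlgebra ℂ A›, ‹StarModule ℂ A› with }
  obtain ⟨Φπ, hΦπ⟩ := exists_starAlgHom t π (π.apply_one hπ)
  obtain ⟨Φρ, hΦρ⟩ := exists_starAlgHom t ρ (ρ.apply_one hρ)
  have hkerΦ : ∀ c : A, Φπ c = 0 → Φρ c = 0 := by
    intro c hc
    have h1 : π.π (t.ι c 1) = 0 := by rw [hΦπ c 1, mul_one, hc]
    have h2 : ρ.π (t.ι c 1) = 0 := hker h1
    rw [hΦρ c 1, mul_one] at h2
    exact h2
  have hnorm : ∀ c : A, ‖Φρ c‖ ≤ ‖Φπ c‖ := starAlgHom_norm_le_of_ker_subset Φπ Φρ hkerΦ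
  have hspan : ∀ y ∈ Submodule.span ℂ {x : P | ∃ a b, t.ι a b = x},
      ∃ m : A, π.π y = Φπ m ∧ ρ.π y = Φρ m := by
    intro y hy
    induction hy using Submodule.span_induction with
    | mem y hy =>
      obtain ⟨a, b, rfl⟩ := hy
      exact ⟨a * b, hΦπ a b, hΦρ a b⟩
    | zero => exact ⟨0, by simp, by simp⟩
    | add u v _ _ hu hv =>
      obtain ⟨m, hm1, hm2⟩ := hu
      obtain ⟨n, hn1, hn2⟩ := hv
      exact ⟨m + n, by rw [map_add, map_add, hm1, hn1], by rw [map_add, map_add, hm2, hn2]⟩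
    | smul c u _ hu =>
      obtain ⟨m, hm1, hm2⟩ := hu
      exact ⟨c • m, by rw [map_smul, map_smul, hm1], by rw [map_smul, map_smul, hm2]⟩
  have hclosed : IsClosed {y : P | ‖ρ.π y‖ ≤ ‖π.π y‖} :=
    isClosed_le ρ.cont.norm π.cont.norm
  have hsub : (Submodule.span ℂ {x : P | ∃ a b, t.ι a b = x} : Set P) ⊆
      {y : P | ‖ρ.π y‖ ≤ ‖π.π y‖} := by
    intro y hy
    obtain ⟨m, hm1, hm2⟩ := hspan y hy
    show ‖ρ.π y‖ ≤ ‖π.π y‖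
    rw [hm1, hm2]
    exact hnorm m
  exact hclosed.closure_subset_iff.mpr hsub (t.dense_span x)
end
end

section
/- Let A be a Banach *-algebra with the Wiener property such that the sobrification Prim^s(A) of Prim*(A), identified with the set of semisimple prime ideals, equals Prime(A). Then A has weak spectral synthesis if and only if A has spectral synthesis. -/
noncomputable section

variable {A : Type} [NormedRing A] [StarRing A] [NormedAlgebra ℂ A]

/-- The space of primitive ideals: kernels of topologically irreducible
`*`-representations. -/
def PrimStar (A : Type) [NormedRing A] [StarRing A] [NormedAlgebra ℂ A] : Set (Set A) :=
  {P | ∃ ρ : StarRep A, ρ.IsIrreducible ∧ P = ρ.ker}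

/-- A closed two-sided ideal, described as a subset. -/
def IsClosedIdeal {C : Type} [NormedRing C] (I : Set C) : Prop :=
  IsClosed I ∧ (0 : C) ∈ I ∧ (∀ x ∈ I, ∀ y ∈ I, x + y ∈ I) ∧ (∀ x ∈ I, -x ∈ I) ∧
    (∀ x ∈ I, ∀ r : C, r * x ∈ I ∧ x * r ∈ I)

/-- A closed prime (two-sided) ideal. -/
def IsClosedPrimeIdeal {C : Type} [NormedRing C] (P : Set C) : Prop :=
  IsClosedIdeal P ∧ P ≠ Set.univ ∧
    ∀ I J : Set C, IsClosedIdeal I → IsClosedIdeal J →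
      (∀ x ∈ I, ∀ y ∈ J, x * y ∈ P) → I ⊆ P ∨ J ⊆ P

/-- The space `Prime(A)` of closed prime ideals. -/
def PrimeIdeals (A : Type) [NormedRing A] : Set (Set A) := {P | IsClosedPrimeIdeal P}

/-- The hull of an ideal with respect to `Prime(A)`. -/
def hullPrime {A : Type} [NormedRing A] (J : Set A) : Set (Set A) :=
  {P ∈ PrimeIdeals A | J ⊆ P}

/-- Weak spectral synthesis: every hull-kernel closed subset `E` of `Prime(A)` is weak
spectral, i.e. `k(E)` is the only closed ideal with hull `E`. -/
def WeakSpectralSynthesis (A : Type) [NormedRing A] : Prop :=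
  ∀ E ⊆ PrimeIdeals A, E = hullPrime (⋂₀ E) →
    ∀ J : Set A, IsClosedIdeal J → hullPrime J = E → J = ⋂₀ E

/-- The Wiener property: every proper closed ideal is contained in the kernel of some
(topologically) irreducible `*`-representation. -/
def WienerProperty (A : Type) [NormedRing A] [StarRing A] [NormedAlgebra ℂ A] : Prop :=
  ∀ I : Set A, IsClosedIdeal I → I ≠ Set.univ → ∃ P ∈ PrimStar A, I ⊆ P

/-- The hull of an ideal with respect to `Prim*(A)`. -/
def hullStar {A : Type} [NormedRing A] [StarRing A] [NormedAlgebra ℂ A] (J : Set A) :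
    Set (Set A) :=
  {P ∈ PrimStar A | J ⊆ P}

/-- Spectral synthesis: every hull-kernel closed subset `E` of `Prim*(A)` is spectral,
i.e. `k(E)` is the only closed ideal with hull `E`. -/
def SpectralSynthesis (A : Type) [NormedRing A] [StarRing A] [NormedAlgebra ℂ A] : Prop :=
  ∀ E ⊆ PrimStar A, E = hullStar (⋂₀ E) →
    ∀ J : Set A, IsClosedIdeal J → hullStar J = E → J = ⋂₀ E

/-- The kernel of a topologically irreducible `*`-representation is a closed prime
ideal. -/
lemma irreducible_ker_isClosedPrimeIdeal (ρ : StarRep A) (h : ρ.IsIrreducible) :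
    IsClosedPrimeIdeal ρ.ker := by
  refine ⟨⟨?_, ?_, ?_, ?_, ?_⟩, ?_, ?_⟩
  · have hEq : ρ.ker = ρ.π ⁻¹' {0} := by ext a; simp [StarRep.ker]
    rw [hEq]; exact isClosed_singleton.preimage ρ.cont
  · show ρ.π 0 = 0; simp
  · intro x hx y hy
    have hx' : ρ.π x = 0 := hx
    have hy' : ρ.π y = 0 := hy
    show ρ.π (x + y) = 0
    rw [map_add, hx', hy', add_zero]
  · intro x hx
    have hx' : ρ.π x = 0 := hx
    show ρ.π (-x) = 0
    rw [map_neg, hx', neg_zero]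
  · intro x hx r
    have hx' : ρ.π x = 0 := hx
    constructor
    · show ρ.π (r * x) = 0; rw [map_mul, hx', mul_zero]
    · show ρ.π (x * r) = 0; rw [map_mul, hx', zero_mul]
  · intro hu
    obtain ⟨a, ha⟩ := h.1
    exact ha (Set.eq_univ_iff_forall.mp hu a)
  · intro I J hI hJ hmul
    by_cases hJk : J ⊆ ρ.ker
    · exact Or.inr hJk
    left
    obtain ⟨b, hbJ, hb⟩ : ∃ b ∈ J, ρ.π b ≠ 0 := by
      by_contra hc; push_neg at hc
      exact hJk fun y hy => hc y hy
    set S : Set ρ.H := {v | ∃ a ∈ J, ∃ x, ρ.π a x = v} with hS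
    set M : Submodule ℂ ρ.H := Submodule.span ℂ S with hM
    set K : Submodule ℂ ρ.H := M.topologicalClosure with hK
    have hMinv : ∀ a : A, M ≤ Submodule.comap (ρ.π a : ρ.H →ₗ[ℂ] ρ.H) M := by
      intro a
      rw [hM, Submodule.span_le]
      rintro v ⟨c, hc, x, rfl⟩
      have : (ρ.π a) ((ρ.π c) x) = ρ.π (a * c) x := by
        rw [map_mul]; rfl
      refine Submodule.mem_comap.mpr ?_
      show (ρ.π a) ((ρ.π c) x) ∈ M
      rw [this]
      exact Submodule.subset_span ⟨a * c, (hJ.2.2.2.2 c hc a).1, x, rfl⟩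
    have hKinv : ∀ a : A, ∀ v ∈ K, ρ.π a v ∈ K := by
      intro a v hv
      have hv' : v ∈ closure (M : Set ρ.H) := hv
      have hmaps : Set.MapsTo (ρ.π a) (M : Set ρ.H) (M : Set ρ.H) := by
        intro w hw
        have hwM : w ∈ M := hw
        exact Submodule.mem_comap.mp (hMinv a hwM)
      have : ρ.π a v ∈ closure (M : Set ρ.H) :=
        map_mem_closure (ρ.π a).continuous hv' hmaps
      exact this
    have hKne : K ≠ ⊥ := by
      obtain ⟨x, hx⟩ : ∃ x, ρ.π b x ≠ 0 := by
        by_contra hc; push_neg at hc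
        exact hb (ContinuousLinearMap.ext hc)
      intro hbot
      have hmem : ρ.π b x ∈ K :=
        M.le_topologicalClosure (Submodule.subset_span ⟨b, hbJ, x, rfl⟩)
      rw [hbot, Submodule.mem_bot] at hmem
      exact hx hmem
    have hKtop : K = ⊤ :=
      (h.2 K M.isClosed_topologicalClosure hKinv).resolve_left hKne
    intro x hx
    show ρ.π x = 0
    ext v
    have hv : v ∈ closure (M : Set ρ.H) := by
      have : v ∈ K := hKtop ▸ Submodule.mem_top
      exact this
    have hker : (M : Set ρ.H) ⊆ {w | ρ.π x w = 0} := by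
      have : M ≤ LinearMap.ker (ρ.π x : ρ.H →ₗ[ℂ] ρ.H) := by
        rw [hM, Submodule.span_le]
        rintro w ⟨c, hc, y, rfl⟩
        have h0 : ρ.π (x * c) = 0 := hmul x hx c hc
        have hxy : (ρ.π x) ((ρ.π c) y) = ρ.π (x * c) y := by rw [map_mul]; rfl
        simp only [SetLike.mem_coe, LinearMap.mem_ker]
        show (ρ.π x) ((ρ.π c) y) = 0
        rw [hxy, h0]; rfl
      intro w hw
      exact this hw
    have hclosed : IsClosed {w : ρ.H | ρ.π x w = 0} := by
      have : {w : ρ.H | ρ.π x w = 0} = (ρ.π x) ⁻¹' {0} := by ext w; simp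
      rw [this]
      exact isClosed_singleton.preimage (ρ.π x).continuous
    have := closure_minimal hker hclosed hv
    simpa using this

lemma primStar_subset_primeIdeals : PrimStar A ⊆ PrimeIdeals A := by
  rintro P ⟨ρ, hρ, rfl⟩
  exact irreducible_ker_isClosedPrimeIdeal ρ hρ

/-- Let `A` be a Banach `*`-algebra with the Wiener property such that
the sobrification of `Prim*(A)`, identified with the semisimple prime ideals, equals
`Prime(A)`, i.e. every closed prime ideal is an intersection of the primitive ideals
containing it.  Then `A` has weak spectral synthesis iff `A` has spectral synthesis. -/
theorem weakSpectralSynthesis_iff_spectralSynthesis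
    {A : Type} [NormedRing A] [StarRing A] [NormedAlgebra ℂ A] [CompleteSpace A]
    (hW : WienerProperty A)
    (hsob : ∀ P ∈ PrimeIdeals A, P = ⋂₀ {Q ∈ PrimStar A | P ⊆ Q}) :
    WeakSpectralSynthesis A ↔ SpectralSynthesis A := by
  have hPS : PrimStar A ⊆ PrimeIdeals A := primStar_subset_primeIdeals
  -- basic facts about hulls
  have hsubhull : ∀ J : Set A, hullStar J ⊆ hullPrime J := by
    intro J P hP
    exact ⟨hPS hP.1, hP.2⟩
  -- the two kernels agree
  have keyL : ∀ J : Set A, ∀ P ∈ PrimeIdeals A, J ⊆ P → ⋂₀ hullStar J ⊆ P := by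
    intro J P hP hJP
    rw [hsob P hP]
    intro a ha
    refine Set.mem_sInter.mpr ?_
    rintro Q ⟨hQstar, hPQ⟩
    exact Set.mem_sInter.mp ha Q ⟨hQstar, hJP.trans hPQ⟩
  have eqInter : ∀ J : Set A, ⋂₀ hullStar J = ⋂₀ hullPrime J := by
    intro J
    apply Set.Subset.antisymm
    · intro a ha
      refine Set.mem_sInter.mpr ?_
      rintro P ⟨hP, hJP⟩
      exact keyL J P hP hJP ha
    · exact Set.sInter_subset_sInter (hsubhull J)
  constructor
  · -- weak spectral synthesis → spectral synthesis
    intro hWSS E hE hEeq J hJ hhull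
    set k : Set A := ⋂₀ E with hk
    have hJk : J ⊆ k := by
      intro a ha
      refine Set.mem_sInter.mpr fun P hP => ?_
      rw [← hhull] at hP
      exact hP.2 ha
    have hkE : hullStar k = E := hEeq.symm
    have hint : ⋂₀ hullPrime k = k := by
      rw [← eqInter k, hkE]
    have hhP : hullPrime J = hullPrime k := by
      apply Set.Subset.antisymm
      · rintro P ⟨hP, hJP⟩
        refine ⟨hP, ?_⟩
        -- show k ⊆ P using hsob
        rw [hsob P hP]
        intro a ha
        refine Set.mem_sInter.mpr ?_
        rintro Q ⟨hQstar, hPQ⟩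
        have hQE : Q ∈ E := by
          rw [← hhull]; exact ⟨hQstar, hJP.trans hPQ⟩
        exact Set.mem_sInter.mp ha Q hQE
      · rintro P ⟨hP, hkP⟩
        exact ⟨hP, hJk.trans hkP⟩
    have := hWSS (hullPrime k) (fun P hP => hP.1)
      (by rw [hint]) J hJ hhP
    rw [this, hint]
  · -- spectral synthesis → weak spectral synthesis
    intro hSS E hE hEeq J hJ hhull
    set k : Set A := ⋂₀ E with hk
    have hJk : J ⊆ k := by
      intro a ha
      refine Set.mem_sInter.mpr fun P hP => ?_
      rw [← hhull] at hP
      exact hP.2 ha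
    have hFk : hullStar J = hullStar k := by
      apply Set.Subset.antisymm
      · rintro P ⟨hPstar, hJP⟩
        refine ⟨hPstar, ?_⟩
        have hPE : P ∈ E := by
          rw [← hhull]; exact ⟨hPS hPstar, hJP⟩
        exact Set.sInter_subset_of_mem hPE
      · rintro P ⟨hPstar, hkP⟩
        exact ⟨hPstar, hJk.trans hkP⟩
    have hintF : ⋂₀ hullStar J = k := by
      rw [eqInter J, hhull]
    have := hSS (hullStar J) (fun P hP => hP.1)
      (by rw [hintF, ← hFk]) J hJ rfl
    rw [this, hintF]
end
end
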